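/- Let φ ∈ L_{h,n} be GL-consistent and let W̃ = {α ∈ C_{h+1,n} : α is GL-consistent and ⊢_{GL} α→φ}. Then: (1) the relation →d on W̃ is transitive; (2) W̃ has no infinite ascending sequence by →d, i.e., there is no infinite sequence (αₙ) in W̃ with αₙ →d αₙ₊₁ for all n. -/
import Mathlib


namespace ModalSOA

/-- Modal formulas: propositional variables, propositional constants, ⊥, →, □. -/
inductive Formula : Type
  | var : ℕ → Formula
  | const : ℕ → Formula
  | bot : Formula
  | imp : Formula → Formula → Formula
  | box : Formula → Formula
deriving DecidableEq

namespace Formula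

/-- ¬φ := φ → ⊥ -/
def neg (φ : Formula) : Formula := φ.imp bot

/-- ⊤ := ¬⊥ -/
def top : Formula := bot.neg

/-- ◇φ := ¬□¬φ -/
def dia (φ : Formula) : Formula := φ.neg.box.neg

/-- φ ∧ ψ := ¬(φ → ¬ψ) -/
def and (φ ψ : Formula) : Formula := (φ.imp ψ.neg).neg

/-- φ ∨ ψ := ¬φ → ψ -/
def or (φ ψ : Formula) : Formula := φ.neg.imp ψ

/-- Uniform substitution: substitute formulas for propositional variables,
    leaving propositional constants fixed. -/
def subst (σ : ℕ → Formula) : Formula → Formula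
  | var n => σ n
  | const n => const n
  | bot => bot
  | imp φ ψ => imp (φ.subst σ) (ψ.subst σ)
  | box φ => box (φ.subst σ)

end Formula

open Formula

/-- The propositional variable p. -/
def pv : Formula := .var 0
/-- The propositional variable q. -/
def qv : Formula := .var 1
/-- The propositional variable r. -/
def rv : Formula := .var 2

/-- The seven extra modal axioms considered: T, B, 4, 5, D, .2, L. -/
inductive ModalAxiom : Type
  | T | B | four | five | D | dot2 | L
deriving DecidableEq

/-- The modal formula corresponding to each axiom name. -/
def ModalAxiom.fml : ModalAxiom → Formula
  | .T => pv.box.imp pv                       -- □p → p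
  | .B => pv.imp pv.dia.box                   -- p → □◇p
  | .four => pv.box.imp pv.box.box            -- □p → □□p
  | .five => pv.dia.imp pv.dia.box            -- ◇p → □◇p
  | .D => pv.box.imp pv.dia                   -- □p → ◇p
  | .dot2 => pv.box.dia.imp pv.dia.box        -- ◇□p → □◇p
  | .L => (pv.box.imp pv).box.imp pv.box      -- □(□p→p) → □p

/-- Hilbert-style provability for the normal modal logic with extra axioms `Ax`:
classical propositional axioms, K, members of `Ax`, modus ponens, necessitation,
and uniform substitution. -/
inductive Prv (Ax : Set Formula) : Formula → Prop
  | ax1 : Prv Ax (pv.imp (qv.imp pv))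
  | ax2 : Prv Ax ((pv.imp (qv.imp rv)).imp ((pv.imp qv).imp (pv.imp rv)))
  | ax3 : Prv Ax ((pv.neg.imp qv.neg).imp (qv.imp pv))
  | axK : Prv Ax ((pv.imp qv).box.imp (pv.box.imp qv.box))
  | extra {φ} : φ ∈ Ax → Prv Ax φ
  | mp {φ ψ} : Prv Ax (φ.imp ψ) → Prv Ax φ → Prv Ax ψ
  | nec {φ} : Prv Ax φ → Prv Ax φ.box
  | subst {φ} (σ : ℕ → Formula) : Prv Ax φ → Prv Ax (φ.subst σ)

/-- The axiom set of the logic KΣ. -/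
def KAxioms (Sig : Set ModalAxiom) : Set Formula := ModalAxiom.fml '' Sig

/-- The axiom set of GL = K{L}. -/
def GLAx : Set Formula := KAxioms {ModalAxiom.L}

/-- Conjunction of a list of formulas (empty conjunction is ⊤). -/
def listConj : List Formula → Formula
  | [] => top
  | [φ] => φ
  | φ :: ψ :: l => φ.and (listConj (ψ :: l))

/-- Disjunction of a list of formulas (empty disjunction is ⊥). -/
def listDisj : List Formula → Formula
  | [] => bot
  | [φ] => φ
  | φ :: ψ :: l => φ.or (listDisj (ψ :: l))

/-- Pbl(Γ, φ): there are ψ₁,…,ψₙ ∈ Γ with ⊢ (ψ₁∧…∧ψₙ) → φ. -/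
def Pbl (Ax : Set Formula) (Γ : Set Formula) (φ : Formula) : Prop :=
  ∃ l : List Formula, (∀ ψ ∈ l, ψ ∈ Γ) ∧ Prv Ax ((listConj l).imp φ)

/-- A formula φ is consistent if ⊬ φ → ⊥. -/
def FmlConsistent (Ax : Set Formula) (φ : Formula) : Prop := ¬ Prv Ax (φ.imp bot)

/-- A set Γ is consistent if ¬Pbl(Γ, ⊥). -/
def SetConsistent (Ax : Set Formula) (Γ : Set Formula) : Prop := ¬ Pbl Ax Γ bot

/-- Γ is maximally consistent: consistent, closed under deduction, and for
every φ, φ ∈ Γ or ¬φ ∈ Γ. -/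
def MaxConsistent (Ax : Set Formula) (Γ : Set Formula) : Prop :=
  SetConsistent Ax Γ ∧ (∀ φ, Pbl Ax Γ φ → φ ∈ Γ) ∧ (∀ φ, φ ∈ Γ ∨ φ.neg ∈ Γ)

/-- Euclidean relation. -/
def Euclidean {W : Type*} (R : W → W → Prop) : Prop := ∀ ⦃x y z⦄, R x y → R x z → R y z

/-- Serial relation. -/
def Serial {W : Type*} (R : W → W → Prop) : Prop := ∀ x, ∃ y, R x y

/-- Directed relation. -/
def Directed {W : Type*} (R : W → W → Prop) : Prop :=
  ∀ ⦃x y z⦄, R x y → R x z → ∃ s, R y s ∧ R z s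

/-- No infinite ascending R-sequence. -/
def NoInfiniteAscent {W : Type*} (R : W → W → Prop) : Prop :=
  ¬ ∃ f : ℕ → W, ∀ n, R (f n) (f (n + 1))

/-- A frame (with relation R) is appropriate to a given modal axiom. -/
def AppropriateTo {W : Type*} (R : W → W → Prop) : ModalAxiom → Prop
  | .T => Reflexive R
  | .B => Symmetric R
  | .four => Transitive R
  | .five => Euclidean R
  | .D => Serial R
  | .dot2 => Directed R
  | .L => Transitive R ∧ NoInfiniteAscent R

/-- A frame is appropriate to Σ if it is appropriate to each member of Σ. -/
def Appropriate {W : Type*} (R : W → W → Prop) (Sig : Set ModalAxiom) : Prop :=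
  ∀ a ∈ Sig, AppropriateTo R a

/-- A valuation on a frame: truth values for all formulas, respecting the
Kripke clauses for ⊥, →, □. -/
structure Valuation {W : Type*} (R : W → W → Prop) where
  val : W → Formula → Bool
  val_bot : ∀ w, val w Formula.bot = false
  val_imp : ∀ w φ ψ, val w (φ.imp ψ) = (!(val w φ) || val w ψ)
  val_box : ∀ w φ, val w φ.box = true ↔ ∀ v, R w v → val v φ = true

/-- F ⊩ φ : every valuation on the frame makes φ true at every world. -/
def FrameForces {W : Type*} (R : W → W → Prop) (φ : Formula) : Prop :=
  ∀ V : Valuation R, ∀ w : W, V.val w φ = true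

/-- Height of a formula. -/
def ht : Formula → ℕ
  | .imp φ ψ => max (ht φ) (ht ψ)
  | .box φ => 1 + ht φ
  | _ => 0

/-- Order of a formula, with respect to the fixed enumeration `atom` of
atomic formulas. -/
def ord : Formula → ℕ
  | .bot => 0
  | .var k => 2 * k + 1
  | .const k => 2 * k + 2
  | .imp φ ψ => max (ord φ) (ord ψ)
  | .box φ => ord φ

/-- A fixed enumeration p₀, p₁, … of the atomic formulas (⊥, variables and
constants), with `ord (atom n) = n`. -/
def atom : ℕ → Formula
  | 0 => .bot
  | n + 1 => if n % 2 = 0 then .var (n / 2) else .const (n / 2)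

/-- φ ∈ L_{h,n}. -/
def InL (h n : ℕ) (φ : Formula) : Prop := ht φ ≤ h ∧ ord φ ≤ n

/-- T̂ for T ⊆ {p₀,…,pₙ}: the conjunction of the atoms in T and the negations
of the remaining atoms among p₀,…,pₙ. -/
def hatT (n : ℕ) (T : List ℕ) : Formula :=
  listConj ((List.range (n + 1)).map (fun i => if i ∈ T then atom i else (atom i).neg))

/-- The canonical formula α_{S,T} = (∧_{ψ∈S} ◇ψ) ∧ □(∨S) ∧ T̂. -/
def canonAlpha (n : ℕ) (S : List Formula) (T : List ℕ) : Formula :=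
  (listConj (S.map dia)).and (((listDisj S).box).and (hatT n T))

/-- The canonical formulas C_{h,n} (as a finite list). -/
def C : ℕ → ℕ → List Formula
  | 0, n => (List.range (n + 1)).sublists.map (hatT n)
  | h + 1, n => (C h n).sublists.flatMap
      (fun S => (List.range (n + 1)).sublists.map (fun T => canonAlpha n S T))

/-- ⊕X := ∨_{α∈X}(α ∧ ∧_{β∈X\{α}} ¬β). -/
def bigOplus (X : List Formula) : Formula :=
  listDisj (X.map (fun α => α.and (listConj ((X.filter (· ≠ α)).map neg))))

/-- The set of subformulas of a formula. -/
def sub : Formula → Finset Formula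
  | .imp φ ψ => insert (Formula.imp φ ψ) (sub φ ∪ sub ψ)
  | .box φ => insert φ.box (sub φ)
  | a => {a}

/-- (W, R, V) is a weak Kripke model of φ: W nonempty and V satisfies the
valuation clauses for ⊥, →, □ on the subformulas of φ. -/
structure IsWeakKripkeModel (φ : Formula) {W : Type*} (R : W → W → Prop)
    (V : W → Formula → Bool) : Prop where
  nonempty : Nonempty W
  val_bot : ∀ w, Formula.bot ∈ sub φ → V w Formula.bot = false
  val_imp : ∀ w ψ θ, ψ.imp θ ∈ sub φ → V w (ψ.imp θ) = (!(V w ψ) || V w θ)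
  val_box : ∀ w ψ, ψ.box ∈ sub φ → (V w ψ.box = true ↔ ∀ v, R w v → V v ψ = true)

/-- W̃ : the KΣ-consistent α ∈ C_{h+1,n} with ⊢ α → φ. -/
def tildeW (Ax : Set Formula) (φ : Formula) (h n : ℕ) : Set Formula :=
  {α | α ∈ C (h + 1) n ∧ FmlConsistent Ax α ∧ Prv Ax (α.imp φ)}

/-- α →c β iff α ∧ ◇β is consistent. -/
def relC (Ax : Set Formula) (α β : Formula) : Prop := FmlConsistent Ax (α.and β.dia)

/-- Ṽ(α, ψ) = 1 iff ⊢ α → ψ. -/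
noncomputable def tildeV (Ax : Set Formula) (α ψ : Formula) : Bool :=
  @decide _ (Classical.propDecidable (Prv Ax (α.imp ψ)))

-- α′ : the unique consistent member of C_{h,n} provably implied by α.
open Classical in
noncomputable def prime (Ax : Set Formula) (h n : ℕ) (α : Formula) : Formula :=
  if hx : ∃ α', α' ∈ C h n ∧ FmlConsistent Ax α' ∧ Prv Ax (α.imp α') then hx.choose
  else Formula.bot

/-- α →m β iff ⊢ α → ◇β′ and every ξ ∈ C_{h,n} with ⊢ β → ◇ξ satisfies ⊢ α → ◇ξ. -/
def relM (Ax : Set Formula) (h n : ℕ) (α β : Formula) : Prop :=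
  Prv Ax (α.imp (prime Ax h n β).dia) ∧
  ∀ ξ ∈ C h n, Prv Ax (β.imp ξ.dia) → Prv Ax (α.imp ξ.dia)

/-- α →d β (for GL) iff α →m β and some γ ∈ C_{h,n} has ⊢ α → ◇γ and ⊢ β → □¬γ. -/
def relD (h n : ℕ) (α β : Formula) : Prop :=
  relM GLAx h n α β ∧
  ∃ γ ∈ C h n, Prv GLAx (α.imp γ.dia) ∧ Prv GLAx (β.imp γ.neg.box)


section AuxLemmas

variable {Ax : Set Formula}

lemma prv_ax1' (A B : Formula) : Prv Ax (A.imp (B.imp A)) := by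
  have h := Prv.subst (Ax := Ax) (fun k => if k = 0 then A else B) Prv.ax1
  simpa [Formula.subst, pv, qv] using h

lemma prv_ax2' (A B C : Formula) :
    Prv Ax ((A.imp (B.imp C)).imp ((A.imp B).imp (A.imp C))) := by
  have h := Prv.subst (Ax := Ax)
    (fun k => if k = 0 then A else if k = 1 then B else C) Prv.ax2
  simpa [Formula.subst, pv, qv, rv] using h

lemma prv_mp2 {A B C : Formula} (h1 : Prv Ax (A.imp (B.imp C)))
    (h2 : Prv Ax (A.imp B)) : Prv Ax (A.imp C) :=
  ((prv_ax2' A B C).mp h1).mp h2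

lemma prv_imp_self (A : Formula) : Prv Ax (A.imp A) :=
  ((prv_ax2' A (A.imp A) A).mp (prv_ax1' A (A.imp A))).mp (prv_ax1' A A)

lemma prv_K_of {A : Formula} (B : Formula) (hA : Prv Ax A) : Prv Ax (B.imp A) :=
  (prv_ax1' A B).mp hA

/-- →d is irreflexive at any GL-consistent formula. -/
lemma relD_irrefl {h n : ℕ} {α : Formula} (hc : FmlConsistent GLAx α) :
    ¬ relD h n α α := by
  rintro ⟨-, γ, -, h1, h2⟩
  exact hc (prv_mp2 h1 h2)

/-- →d is transitive, assuming the middle formula is GL-consistent. -/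
lemma relD_trans {hh n : ℕ} {α β γ : Formula} (hβc : FmlConsistent GLAx β)
    (h1 : relD hh n α β) (h2 : relD hh n β γ) : relD hh n α γ := by
  obtain ⟨⟨hm1, hm2⟩, γ1, hγ1C, hαγ1, hβγ1⟩ := h1
  obtain ⟨⟨hm1', hm2'⟩, γ2, hγ2C, hβγ2, hγγ2⟩ := h2
  refine ⟨⟨?_, fun ξ hξ hγξ => hm2 ξ hξ (hm2' ξ hξ hγξ)⟩,
    γ2, hγ2C, hm2 γ2 hγ2C hβγ2, hγγ2⟩
  by_cases hx : ∃ α', α' ∈ C hh n ∧ FmlConsistent GLAx α' ∧ Prv GLAx (γ.imp α')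
  · have hp : prime GLAx hh n γ = hx.choose := by
      unfold prime; exact dif_pos hx
    have hmem : prime GLAx hh n γ ∈ C hh n := by
      rw [hp]; exact hx.choose_spec.1
    exact hm2 _ hmem hm1'
  · exfalso
    have hp : prime GLAx hh n γ = Formula.bot := by
      unfold prime; exact dif_neg hx
    rw [hp] at hm1'
    exact hβc (prv_mp2 hm1' (prv_K_of _ (Prv.nec (prv_imp_self Formula.bot))))

end AuxLemmas

/-- For GL-consistent φ ∈ L_{h,n}, the relation →d on W̃ is
transitive and has no infinite ascending sequence. -/
theorem relD_properties (h n : ℕ) (φ : Formula) (hφ : InL h n φ)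
    (hcons : FmlConsistent GLAx φ) :
    (∀ α ∈ tildeW GLAx φ h n, ∀ β ∈ tildeW GLAx φ h n,
      ∀ γ ∈ tildeW GLAx φ h n,
        relD h n α β → relD h n β γ → relD h n α γ) ∧
    ¬ ∃ f : ℕ → ↥(tildeW GLAx φ h n), ∀ k, relD h n (f k).1 (f (k + 1)).1 := by
  constructor
  · intro α hα β hβ γ hγ h1 h2
    exact relD_trans hβ.2.1 h1 h2
  · rintro ⟨f, hf⟩
    have hfin : (tildeW GLAx φ h n).Finite :=
      Set.Finite.subset (C (h + 1) n).finite_toSet (fun x hx => hx.1)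
    haveI := hfin.to_subtype
    obtain ⟨i, j, hne, heq⟩ := Finite.exists_ne_map_eq_of_infinite f
    have key : ∀ m i, relD h n (f i).1 (f (i + m + 1)).1 := by
      intro m
      induction m with
      | zero => intro i; exact hf i
      | succ m ih =>
        intro i
        exact relD_trans (f (i + m + 1)).2.2.1 (ih i) (hf (i + m + 1))
    have chain : ∀ i j, i < j → relD h n (f i).1 (f j).1 := by
      intro i j hij
      have := key (j - i - 1) i
      rwa [show i + (j - i - 1) + 1 = j by omega] at this
    rcases Ne.lt_or_gt hne with hij | hij
    · have h2 := chain i j hij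
      rw [heq] at h2
      exact relD_irrefl (f j).2.2.1 h2
    · have h2 := chain j i hij
      rw [← heq] at h2
      exact relD_irrefl (f i).2.2.1 h2

end ModalSOA
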